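/- The pile dominates the workload: let (α_k, σ_k, τ_k), k ≥ 0, be jobs with 1 ≤ α_k ≤ s, σ_k ≥ 0, τ_k ≥ 0. Let W_0 = 0, W_{k+1} = Φ_{α_k,σ_k,τ_k}(W_k) be the forward workload sequence and H_0 = 0, H_{k+1} = Ψ_{α_k,σ_k}(H_k) the pile sequence built from the same jobs with all inter-arrival times set to zero. Then for every n ≥ 0, W_n ≤ H_n coordinatewise. -/

import Mathlib

/-- The nondecreasing rearrangement operator `R` on vectors of ℝ^s. -/
noncomputable def sortVec {s : ℕ} (v : Fin s → ℝ) : Fin s → ℝ := v ∘ Tuple.sort v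

/-- The all-ones vector `U`. -/
def Uvec (s : ℕ) : Fin s → ℝ := fun _ => 1

/-- `L(α)`: coordinate `i` is `1` if `i ≤ α` and `0` otherwise (indices 0-based,
so `α : Fin s` represents the number of requested servers `α+1 ∈ {1,…,s}`). -/
def Lvec {s : ℕ} (α : Fin s) : Fin s → ℝ := fun i => if i ≤ α then 1 else 0

/-- `S(α, W)`: coordinate `i` is `max (W^α) (W^i)`. -/
def Svec {s : ℕ} (α : Fin s) (W : Fin s → ℝ) : Fin s → ℝ := fun i => max (W α) (W i)

/-- A vector is ordered if its coordinates are nondecreasing and nonnegative. -/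
def IsOrdered {s : ℕ} (W : Fin s → ℝ) : Prop := Monotone W ∧ ∀ i, 0 ≤ W i

/-- The one-step MJSRE map `Φ_{α,σ,τ}(W) = R(S(α,W) + σ·L(α) − τ·U)⁺`. -/
noncomputable def Phi {s : ℕ} (α : Fin s) (σ τ : ℝ) (W : Fin s → ℝ) : Fin s → ℝ :=
  sortVec (fun i => max (Svec α W i + σ * Lvec α i - τ * Uvec s i) 0)

/-- The one-step pile map `Ψ_{α,σ}(W) = R(S(α,W) + σ·L(α))`. -/
noncomputable def Psi {s : ℕ} (α : Fin s) (σ : ℝ) (W : Fin s → ℝ) : Fin s → ℝ :=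
  sortVec (fun i => Svec α W i + σ * Lvec α i)

/-- Forward workload sequence: `W 0 = 0`, `W (k+1) = Φ_{α_k,σ_k,τ_k}(W k)`. -/
noncomputable def forwardW {s : ℕ} (a : ℕ → Fin s) (σf τf : ℕ → ℝ) : ℕ → (Fin s → ℝ)
  | 0 => 0
  | k + 1 => Phi (a k) (σf k) (τf k) (forwardW a σf τf k)

/-- Pile sequence built from the same jobs with all inter-arrival times set to zero:
`H 0 = 0`, `H (k+1) = Ψ_{α_k,σ_k}(H k)`. -/
noncomputable def pileSeq {s : ℕ} (a : ℕ → Fin s) (σf : ℕ → ℝ) : ℕ → (Fin s → ℝ)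
  | 0 => 0
  | k + 1 => Psi (a k) (σf k) (pileSeq a σf k)

/-! Both sequences are driven by the same jobs; the pile never subtracts the inter-arrival
times `τ_k` and never truncates at `0`, so one step of `Φ` lies below one step of `Ψ` as soon as
the inputs are ordered that way and the pile is nonnegative. The induction then only needs that
sorting is monotone: the `j`-th smallest coordinate is `≤ a` iff more than `j` coordinates
are `≤ a`, and that count can only grow when the coordinates decrease. -/

open Finset in
theorem Tuple.comp_sort_le_comp_sort {n : ℕ} {α : Type*} [LinearOrder α] {f g : Fin n → α}
    (h : f ≤ g) : f ∘ Tuple.sort f ≤ g ∘ Tuple.sort g := by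
  intro j
  set a := g (Tuple.sort g j)
  have hg : j < #{k | g (Tuple.sort g k) ≤ a} :=
    (Tuple.lt_card_le_iff_apply_le_of_monotone (Tuple.monotone_sort g)).2 le_rfl
  have hcount : #{k | g (Tuple.sort g k) ≤ a} ≤ #{k | f (Tuple.sort f k) ≤ a} :=
    calc #{k | g (Tuple.sort g k) ≤ a}
        = #{i | g i ≤ a} := card_equiv (Tuple.sort g) (by simp)
      _ ≤ #{i | f i ≤ a} := card_le_card (monotone_filter_right _ fun i _ hi => (h i).trans hi)
      _ = #{k | f (Tuple.sort f k) ≤ a} := (card_equiv (Tuple.sort f) (by simp)).symm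
  exact (Tuple.lt_card_le_iff_apply_le_of_monotone (Tuple.monotone_sort f)).1
    (hg.trans_le hcount)

section OneStep

variable {s : ℕ} {α : Fin s} {σ τ : ℝ} {W H : Fin s → ℝ}

lemma sortVec_mono : Monotone (sortVec (s := s)) :=
  fun _ _ h => Tuple.comp_sort_le_comp_sort h

lemma Svec_mono (α : Fin s) : Monotone (Svec α) :=
  fun _ _ h i => max_le_max (h α) (h i)

lemma Svec_add_mul_Lvec_nonneg (hσ : 0 ≤ σ) (hW : 0 ≤ W) (i : Fin s) :
    0 ≤ Svec α W i + σ * Lvec α i := by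
  have hL : 0 ≤ Lvec α i := by unfold Lvec; split_ifs <;> norm_num
  exact add_nonneg (le_max_of_le_right (hW i)) (mul_nonneg hσ hL)

lemma Psi_nonneg (hσ : 0 ≤ σ) (hW : 0 ≤ W) : 0 ≤ Psi α σ W :=
  fun _ => Svec_add_mul_Lvec_nonneg hσ hW _

lemma Phi_le_Psi (hσ : 0 ≤ σ) (hτ : 0 ≤ τ) (hWH : W ≤ H) (hH : 0 ≤ H) :
    Phi α σ τ W ≤ Psi α σ H := by
  refine sortVec_mono fun j => max_le ?_ (Svec_add_mul_Lvec_nonneg hσ hH j)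
  have hS : Svec α W j ≤ Svec α H j := Svec_mono α hWH j
  have hU : Uvec s j = 1 := rfl
  rw [hU]
  linarith

end OneStep

lemma pileSeq_nonneg {s : ℕ} (a : ℕ → Fin s) (σf : ℕ → ℝ) (hσ : ∀ k, 0 ≤ σf k) (n : ℕ) :
    0 ≤ pileSeq a σf n := by
  induction n with
  | zero => exact le_rfl
  | succ k ih => exact Psi_nonneg (hσ k) ih

theorem forwardW_le_pileSeq_general (s : ℕ)
    (a : ℕ → Fin s) (σf τf : ℕ → ℝ) (hσ : ∀ k, 0 ≤ σf k) (hτ : ∀ k, 0 ≤ τf k) :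
    ∀ n : ℕ, ∀ i, forwardW a σf τf n i ≤ pileSeq a σf n i := by
  intro n
  induction n with
  | zero => exact fun _ => le_rfl
  | succ k ih => exact Phi_le_Psi (hσ k) (hτ k) ih (pileSeq_nonneg a σf hσ k)

/-- The pile dominates the workload: `W_n ≤ H_n` coordinatewise for every `n`. -/
theorem forwardW_le_pileSeq (s : ℕ) (hs : 0 < s)
    (a : ℕ → Fin s) (σf τf : ℕ → ℝ) (hσ : ∀ k, 0 ≤ σf k) (hτ : ∀ k, 0 ≤ τf k) :
    ∀ n : ℕ, ∀ i, forwardW a σf τf n i ≤ pileSeq a σf n i :=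
  forwardW_le_pileSeq_general s a σf τf hσ hτ
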